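/- Vajda's identity: for all nonnegative integers n, i, j, B_{k,n+i}·B_{k,n+j} − B_{k,n}·B_{k,n+i+j} = (k−1)^n · B_{k,i}·B_{k,j}. -/
import Mathlib


def B (k : ℤ) : ℕ → ℤ
  | 0 => 0
  | 1 => 1
  | (n+2) => 3*k * B k (n+1) + (1-k) * B k n

lemma B_rec (k : ℤ) (n : ℕ) : B k (n+2) = 3*k * B k (n+1) + (1-k) * B k n := rfl

lemma cassini (k : ℤ) (n : ℕ) :
    B k (n+1) * B k (n+1) - B k n * B k (n+2) = (k-1) ^ n := by
  induction n with
  | zero => simp [B]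
  | succ m ih =>
    show B k (m+2) * B k (m+2) - B k (m+1) * B k (m+3) = (k-1)^(m+1)
    rw [B_rec k (m+1), B_rec k m, pow_succ]
    rw [B_rec k m] at ih
    linear_combination (k-1) * ih

lemma docagne (k : ℤ) (n i : ℕ) :
    B k (n+i) * B k (n+1) - B k n * B k (n+i+1) = (k-1) ^ n * B k i := by
  induction i using Nat.twoStepInduction with
  | zero =>
    simp [B]
    try ring
  | one =>
    show B k (n+1) * B k (n+1) - B k n * B k (n+2) = (k-1)^n * B k 1
    rw [B_rec k n]
    have := cassini k n
    rw [B_rec k n] at this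
    simp only [B]
    try linear_combination this
  | more m ih1 ih2 =>
    show B k (n+m+2) * B k (n+1) - B k n * B k (n+m+3) = (k-1)^n * B k (m+2)
    have e : n + (m+1) = n + m + 1 := rfl
    rw [e] at ih2
    rw [show n+m+3 = (n+m+1)+2 from rfl, B_rec k (n+m+1), B_rec k (n+m), B_rec k m]
    rw [B_rec k (n+m)] at ih2
    linear_combination 3*k*ih2 + (1-k)*ih1

theorem stmt11 (k : ℤ) (hk : 1 ≤ k) (n i j : ℕ) :
    B k (n+i) * B k (n+j) - B k n * B k (n+i+j) = (k-1) ^ n * B k i * B k j := by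
  induction j using Nat.twoStepInduction with
  | zero =>
    simp [B]
    try ring
  | one =>
    have := docagne k n i
    simp only [B]
    linear_combination this
  | more m ih1 ih2 =>
    show B k (n+i) * B k (n+m+2) - B k n * B k (n+i+m+2) = (k-1)^n * B k i * B k (m+2)
    have e1 : n + (m+1) = n + m + 1 := rfl
    have e2 : n + i + (m+1) = n + i + m + 1 := rfl
    rw [e1, e2] at ih2
    rw [B_rec k (n+m), B_rec k (n+i+m), B_rec k m]
    linear_combination 3*k*ih2 + (1-k)*ih1
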